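/- If C_1 = C_2 and ρ_{12} = 0, then for every Q ∈ [0,1), P_cor^opt(Q) = C_2(1−Q); equivalently, R_cor^opt(Q) = P_cor^opt(Q)/(1−Q) = C_2 for all Q ∈ [0,1). -/

import Mathlib

open Matrix ComplexOrder

noncomputable section

namespace FRIR

/-- A three-outcome POVM on a qubit: `M₀` is the inconclusive outcome. -/
def IsPOVM (M₀ M₁ M₂ : Matrix (Fin 2) (Fin 2) ℂ) : Prop :=
  M₀.PosSemidef ∧ M₁.PosSemidef ∧ M₂.PosSemidef ∧ M₀ + M₁ + M₂ = 1

/-- `ρ₀ = q₁ρ₁ + q₂ρ₂`. -/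
def rho0 (q₁ q₂ : ℝ) (ρ₁ ρ₂ : Matrix (Fin 2) (Fin 2) ℂ) : Matrix (Fin 2) (Fin 2) ℂ :=
  (q₁ : ℂ) • ρ₁ + (q₂ : ℂ) • ρ₂

/-- The probability of the inconclusive result, `P_I = tr(ρ₀M₀)`. -/
def PIof (q₁ q₂ : ℝ) (ρ₁ ρ₂ M₀ : Matrix (Fin 2) (Fin 2) ℂ) : ℝ :=
  (Matrix.trace (rho0 q₁ q₂ ρ₁ ρ₂ * M₀)).re

/-- `P_cor = q₁tr(ρ₁M₁) + q₂tr(ρ₂M₂)`. -/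
def Pcor (q₁ q₂ : ℝ) (ρ₁ ρ₂ M₁ M₂ : Matrix (Fin 2) (Fin 2) ℂ) : ℝ :=
  q₁ * (Matrix.trace (ρ₁ * M₁)).re + q₂ * (Matrix.trace (ρ₂ * M₂)).re

/-- `P̄_cor = q·tr(ρ₀M₀) + q₁tr(ρ₁M₁) + q₂tr(ρ₂M₂)`. -/
def PbarCor (q q₁ q₂ : ℝ) (ρ₁ ρ₂ M₀ M₁ M₂ : Matrix (Fin 2) (Fin 2) ℂ) : ℝ :=
  q * PIof q₁ q₂ ρ₁ ρ₂ M₀ + Pcor q₁ q₂ ρ₁ ρ₂ M₁ M₂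

/-- `P̄_cor^opt(q)`: the maximal value of `P̄_cor` over all POVMs. -/
def PbarOpt (q q₁ q₂ : ℝ) (ρ₁ ρ₂ : Matrix (Fin 2) (Fin 2) ℂ) : ℝ :=
  sSup {x : ℝ | ∃ M₀ M₁ M₂, IsPOVM M₀ M₁ M₂ ∧ PbarCor q q₁ q₂ ρ₁ ρ₂ M₀ M₁ M₂ = x}

/-- `P_cor^opt(Q)`: the maximal value of `P_cor` over POVMs with `P_I = Q`. -/
def PcorOpt (Q q₁ q₂ : ℝ) (ρ₁ ρ₂ : Matrix (Fin 2) (Fin 2) ℂ) : ℝ :=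
  sSup {x : ℝ | ∃ M₀ M₁ M₂, IsPOVM M₀ M₁ M₂ ∧
    PIof q₁ q₂ ρ₁ ρ₂ M₀ = Q ∧ Pcor q₁ q₂ ρ₁ ρ₂ M₁ M₂ = x}

/-- `P_I(q) = { tr(ρ₀M₀) : POVMs attaining P̄_cor^opt(q) }`. -/
def PIset (q q₁ q₂ : ℝ) (ρ₁ ρ₂ : Matrix (Fin 2) (Fin 2) ℂ) : Set ℝ :=
  {Q : ℝ | ∃ M₀ M₁ M₂, IsPOVM M₀ M₁ M₂ ∧
    PbarCor q q₁ q₂ ρ₁ ρ₂ M₀ M₁ M₂ = PbarOpt q q₁ q₂ ρ₁ ρ₂ ∧ PIof q₁ q₂ ρ₁ ρ₂ M₀ = Q}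

/-- `q₀⁽⁰⁾ = sup{q > 0 : 0 ∈ P_I(q)}`. -/
def q0low (q₁ q₂ : ℝ) (ρ₁ ρ₂ : Matrix (Fin 2) (Fin 2) ℂ) : ℝ :=
  sSup {q : ℝ | 0 < q ∧ (0 : ℝ) ∈ PIset q q₁ q₂ ρ₁ ρ₂}

/-- `q₀⁽¹⁾ = inf{q > 0 : 1 ∈ P_I(q)}`. -/
def q0high (q₁ q₂ : ℝ) (ρ₁ ρ₂ : Matrix (Fin 2) (Fin 2) ℂ) : ℝ :=
  sInf {q : ℝ | 0 < q ∧ (1 : ℝ) ∈ PIset q q₁ q₂ ρ₁ ρ₂}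

end FRIR

/-!
Write `C = C₁ = C₂`, `ρ₀ = S²` and `Pᵢ = νᵢνᵢ*`, so that `q₁ρ₁ = S(CP₁ + (1-C)P₂)S` and
`q₂ρ₂ = S((1-C)P₁ + CP₂)S`. Since `C > 1/2`, `Cρ₀ - qᵢρᵢ = (2C-1) S Pⱼ S ≥ 0` (`j ≠ i`), hence
every POVM has `P_cor ≤ C tr(ρ₀(M₁ + M₂)) = C(1 - P_I)`.

Conversely `ρ₁₂ = 0` makes `ρ₀ = ρ₁₁P₁ + ρ₂₂P₂`, so `M₀ = Q·1`, `Mᵢ = (1-Q)ρᵢᵢ S⁻¹PᵢS⁻¹` is a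
POVM with `P_I = Q`; as `tr(S B S · S⁻¹ X S⁻¹) = tr(B X)`, it has
`P_cor = C(1-Q)(ρ₁₁ + ρ₂₂) = C(1-Q)`.
-/

namespace Matrix

variable {n : Type*} [Fintype n]

lemma PosSemidef.trace_mul_nonneg {A B : Matrix n n ℂ} (hA : A.PosSemidef) (hB : B.PosSemidef) :
    0 ≤ (A * B).trace := by
  classical
  open scoped MatrixOrder in
  obtain ⟨C, rfl⟩ := CStarAlgebra.nonneg_iff_eq_star_mul_self.mp hA.nonneg
  rw [star_eq_conjTranspose, Matrix.mul_assoc, trace_mul_comm]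
  exact (hB.mul_mul_conjTranspose_same C).trace_nonneg

lemma re_trace_mul_le_of_posSemidef_sub {X Y M : Matrix n n ℂ} (hXY : (Y - X).PosSemidef)
    (hM : M.PosSemidef) : (X * M).trace.re ≤ (Y * M).trace.re := by
  have h := (Complex.nonneg_iff.mp (hXY.trace_mul_nonneg hM)).1
  rwa [Matrix.sub_mul, trace_sub, Complex.sub_re, sub_nonneg] at h

lemma re_trace_smul_mul (r : ℝ) (A B : Matrix n n ℂ) :
    ((r : ℂ) • A * B).trace.re = r * (A * B).trace.re := by
  rw [Matrix.smul_mul, trace_smul, smul_eq_mul, Complex.re_ofReal_mul]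

lemma vecMulVec_self_star_mul_vecMulVec_self_star (u v : n → ℂ) :
    vecMulVec u (star u) * vecMulVec v (star v) = (star u ⬝ᵥ v) • vecMulVec u (star v) := by
  rw [vecMulVec_mul_vecMulVec]
  ext i j
  simp [vecMulVec_apply, mul_left_comm]

lemma vecMulVec_self_star_mul_mul_vecMulVec_self_star (A : Matrix n n ℂ) (u v : n → ℂ) :
    vecMulVec u (star u) * A * vecMulVec v (star v)
      = (star u ⬝ᵥ (A *ᵥ v)) • vecMulVec u (star v) := by
  rw [vecMulVec_mul, vecMulVec_mul_vecMulVec, dotProduct_mulVec]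
  ext i j
  simp [vecMulVec_apply, mul_left_comm]

lemma trace_smul_add_smul_mul_vecMulVec_self_star {u v : n → ℂ} (hu : star u ⬝ᵥ u = 1)
    (hvu : star v ⬝ᵥ u = 0) (a b : ℂ) :
    ((a • vecMulVec u (star u) + b • vecMulVec v (star v)) * vecMulVec u (star u)).trace = a := by
  simp only [Matrix.add_mul, Matrix.smul_mul, vecMulVec_self_star_mul_vecMulVec_self_star, hu, hvu,
    zero_smul, one_smul, smul_zero, add_zero, trace_smul, trace_vecMulVec, dotProduct_comm u,
    smul_eq_mul, mul_one]

lemma eq_smul_add_smul_of_dotProduct_mulVec_eq_zero [DecidableEq n] {A : Matrix n n ℂ}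
    (hA : A.IsHermitian) {u v : n → ℂ} (huv : vecMulVec u (star u) + vecMulVec v (star v) = 1)
    (h : star u ⬝ᵥ (A *ᵥ v) = 0) :
    A = (star u ⬝ᵥ (A *ᵥ u)) • vecMulVec u (star u)
      + (star v ⬝ᵥ (A *ᵥ v)) • vecMulVec v (star v) := by
  have h' : star v ⬝ᵥ (A *ᵥ u) = star (star u ⬝ᵥ (A *ᵥ v)) := by
    rw [star_dotProduct, star_mulVec, hA.eq, ← dotProduct_mulVec]
  rw [h, star_zero] at h'
  calc A = (vecMulVec u (star u) + vecMulVec v (star v)) * A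
        * (vecMulVec u (star u) + vecMulVec v (star v)) := by
        rw [huv, Matrix.one_mul, Matrix.mul_one]
    _ = _ := by
        simp only [Matrix.add_mul, Matrix.mul_add, vecMulVec_self_star_mul_mul_vecMulVec_self_star,
          h, h', zero_smul, add_zero, zero_add]

lemma vecMulVec_self_star_add_vecMulVec_self_star_eq_one {u v : Fin 2 → ℂ}
    (hu : star u ⬝ᵥ u = 1) (hv : star v ⬝ᵥ v = 1) (huv : star u ⬝ᵥ v = 0) :
    vecMulVec u (star u) + vecMulVec v (star v) = 1 := by
  have hvu : star v ⬝ᵥ u = 0 := by rw [star_dotProduct, huv, star_zero]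
  set U : Matrix (Fin 2) (Fin 2) ℂ := Matrix.of ![star u, star v]
  have hU : U * Uᴴ = 1 := by
    ext i j
    simp only [dotProduct, Fin.sum_univ_two, Pi.star_apply, Complex.star_def] at hu hv huv hvu
    fin_cases i <;> fin_cases j <;> simp [U, Matrix.mul_apply] <;> grind
  rw [← mul_eq_one_comm.mp hU]
  ext i j
  simp [U, Matrix.mul_apply, Fin.sum_univ_two, vecMulVec_apply]

lemma trace_conj_mul_conj_inv [DecidableEq n] {S : Matrix n n ℂ} (hS : IsUnit S.det)
    (B X : Matrix n n ℂ) : ((S * B * S) * (S⁻¹ * X * S⁻¹)).trace = (B * X).trace := by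
  have h : (S * B * S) * (S⁻¹ * X * S⁻¹) = S * (B * X) * S⁻¹ := by
    simp only [Matrix.mul_assoc, mul_nonsing_inv_cancel_left _ _ hS]
  rw [h, trace_mul_cycle, nonsing_inv_mul _ hS, Matrix.one_mul]

lemma posSemidef_conj_inv_of_isHermitian [DecidableEq n] {S A : Matrix n n ℂ} (hS : S.IsHermitian)
    (hA : A.PosSemidef) : (S⁻¹ * A * S⁻¹).PosSemidef := by
  simpa [conjTranspose_nonsing_inv, hS.eq] using hA.conjTranspose_mul_mul_same S⁻¹

lemma posSemidef_smul_mul_self_sub [DecidableEq n] {S P P' : Matrix n n ℂ} (hS : S.IsHermitian)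
    (hP' : P'.PosSemidef) (hPP' : P + P' = 1) {c : ℝ} (hc : 1 / 2 ≤ c) :
    ((c : ℂ) • (S * S) - S * ((c : ℂ) • P + ((1 - c : ℝ) : ℂ) • P') * S).PosSemidef := by
  have h : (c : ℂ) • (S * S) - S * ((c : ℂ) • P + ((1 - c : ℝ) : ℂ) • P') * S
      = Sᴴ * (((2 * c - 1 : ℝ) : ℂ) • P') * S := by
    have hcS : (c : ℂ) • (S * S) = S * ((c : ℂ) • (P + P')) * S := by
      rw [hPP', Matrix.mul_smul, Matrix.mul_one, Matrix.smul_mul]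
    rw [hS.eq, hcS, ← Matrix.sub_mul, ← Matrix.mul_sub]
    congr 2
    push_cast
    module
  rw [h]
  exact (hP'.smul (Complex.zero_le_real.mpr (by linarith))).conjTranspose_mul_mul_same S

lemma re_trace_mul_le_of_sandwich [DecidableEq n] {S P P' X M : Matrix n n ℂ} (hS : S.IsHermitian)
    (hP' : P'.PosSemidef) (hPP' : P + P' = 1) {c : ℝ} (hc : 1 / 2 ≤ c)
    (hX : S * ((c : ℂ) • P + ((1 - c : ℝ) : ℂ) • P') * S = X) (hM : M.PosSemidef) :
    (X * M).trace.re ≤ c * (S * S * M).trace.re := by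
  rw [← re_trace_smul_mul, ← hX]
  exact re_trace_mul_le_of_posSemidef_sub (posSemidef_smul_mul_self_sub hS hP' hPP' hc) hM

end Matrix

namespace FRIR

variable {q₁ q₂ : ℝ} {ρ₁ ρ₂ : Matrix (Fin 2) (Fin 2) ℂ}

lemma trace_rho0 (hq : q₁ + q₂ = 1) (htr₁ : ρ₁.trace = 1) (htr₂ : ρ₂.trace = 1) :
    (rho0 q₁ q₂ ρ₁ ρ₂).trace = 1 := by
  simp [rho0, htr₁, htr₂, ← Complex.ofReal_add, hq]

lemma Pcor_le {S P₁ P₂ M₀ M₁ M₂ : Matrix (Fin 2) (Fin 2) ℂ} {c : ℝ} (hS : S.IsHermitian)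
    (hSS : S * S = rho0 q₁ q₂ ρ₁ ρ₂) (hR : (rho0 q₁ q₂ ρ₁ ρ₂).trace = 1)
    (hP₁ : P₁.PosSemidef) (hP₂ : P₂.PosSemidef) (hP : P₁ + P₂ = 1) (hc : 1 / 2 ≤ c)
    (hbar₁ : S * ((c : ℂ) • P₁ + ((1 - c : ℝ) : ℂ) • P₂) * S = (q₁ : ℂ) • ρ₁)
    (hbar₂ : S * (((1 - c : ℝ) : ℂ) • P₁ + (c : ℂ) • P₂) * S = (q₂ : ℂ) • ρ₂)
    (hM : IsPOVM M₀ M₁ M₂) :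
    Pcor q₁ q₂ ρ₁ ρ₂ M₁ M₂ ≤ c * (1 - PIof q₁ q₂ ρ₁ ρ₂ M₀) := by
  obtain ⟨-, hM₁, hM₂, hsum⟩ := hM
  have h₁ := re_trace_mul_le_of_sandwich hS hP₂ hP hc hbar₁ hM₁
  have h₂ := re_trace_mul_le_of_sandwich (X := (q₂ : ℂ) • ρ₂) hS hP₁ ((add_comm _ _).trans hP)
    hc (by rw [add_comm]; exact hbar₂) hM₂
  have htotal : (rho0 q₁ q₂ ρ₁ ρ₂ * M₀).trace.re + (rho0 q₁ q₂ ρ₁ ρ₂ * M₁).trace.re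
      + (rho0 q₁ q₂ ρ₁ ρ₂ * M₂).trace.re = 1 := by
    rw [← Complex.add_re, ← Complex.add_re, ← trace_add, ← trace_add, ← Matrix.mul_add,
      ← Matrix.mul_add, hsum, Matrix.mul_one, hR, Complex.one_re]
  rw [re_trace_smul_mul, hSS] at h₁ h₂
  unfold Pcor PIof
  linear_combination h₁ + h₂ + c * htotal

lemma exists_isPOVM_Pcor_eq {S : Matrix (Fin 2) (Fin 2) ℂ} {ν₁ ν₂ : Fin 2 → ℂ} {c r₁ r₂ Q : ℝ}
    (hS : S.IsHermitian) (hSdet : IsUnit S.det) (hSS : S * S = rho0 q₁ q₂ ρ₁ ρ₂)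
    (hR : (rho0 q₁ q₂ ρ₁ ρ₂).trace = 1)
    (hν₁ : star ν₁ ⬝ᵥ ν₁ = 1) (hν₂ : star ν₂ ⬝ᵥ ν₂ = 1) (hν₁₂ : star ν₁ ⬝ᵥ ν₂ = 0)
    (hr₁ : 0 ≤ r₁) (hr₂ : 0 ≤ r₂)
    (hdec : rho0 q₁ q₂ ρ₁ ρ₂
      = (r₁ : ℂ) • vecMulVec ν₁ (star ν₁) + (r₂ : ℂ) • vecMulVec ν₂ (star ν₂))
    (hbar₁ : S * ((c : ℂ) • vecMulVec ν₁ (star ν₁)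
        + ((1 - c : ℝ) : ℂ) • vecMulVec ν₂ (star ν₂)) * S = (q₁ : ℂ) • ρ₁)
    (hbar₂ : S * (((1 - c : ℝ) : ℂ) • vecMulVec ν₁ (star ν₁)
        + (c : ℂ) • vecMulVec ν₂ (star ν₂)) * S = (q₂ : ℂ) • ρ₂)
    (hQ₀ : 0 ≤ Q) (hQ₁ : Q ≤ 1) :
    ∃ M₀ M₁ M₂, IsPOVM M₀ M₁ M₂ ∧ PIof q₁ q₂ ρ₁ ρ₂ M₀ = Q ∧
      Pcor q₁ q₂ ρ₁ ρ₂ M₁ M₂ = c * (1 - Q) := by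
  set P₁ := vecMulVec ν₁ (star ν₁)
  set P₂ := vecMulVec ν₂ (star ν₂)
  have hν₂₁ : star ν₂ ⬝ᵥ ν₁ = 0 := by rw [star_dotProduct, hν₁₂, star_zero]
  have hr : r₁ + r₂ = 1 := by
    have h := congrArg trace hdec
    simp only [hR, trace_add, trace_smul, P₁, P₂, trace_vecMulVec, dotProduct_comm _ (star _), hν₁,
      hν₂, smul_eq_mul, mul_one] at h
    exact_mod_cast h.symm
  have hP₁ : q₁ * (ρ₁ * (S⁻¹ * P₁ * S⁻¹)).trace.re = c := by
    rw [← re_trace_smul_mul, ← hbar₁, trace_conj_mul_conj_inv hSdet,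
      trace_smul_add_smul_mul_vecMulVec_self_star hν₁ hν₂₁, Complex.ofReal_re]
  have hP₂ : q₂ * (ρ₂ * (S⁻¹ * P₂ * S⁻¹)).trace.re = c := by
    rw [← re_trace_smul_mul, ← hbar₂, add_comm, trace_conj_mul_conj_inv hSdet,
      trace_smul_add_smul_mul_vecMulVec_self_star hν₂ hν₁₂, Complex.ofReal_re]
  have hsum : (((1 - Q) * r₁ : ℝ) : ℂ) • (S⁻¹ * P₁ * S⁻¹)
      + (((1 - Q) * r₂ : ℝ) : ℂ) • (S⁻¹ * P₂ * S⁻¹) = ((1 - Q : ℝ) : ℂ) • 1 := by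
    have h : S⁻¹ * ((r₁ : ℂ) • P₁ + (r₂ : ℂ) • P₂) * S⁻¹ = 1 := by
      rw [← hdec, ← hSS, Matrix.mul_assoc, Matrix.mul_assoc, mul_nonsing_inv _ hSdet,
        Matrix.mul_one, nonsing_inv_mul _ hSdet]
    rw [← h]
    simp only [Matrix.mul_add, Matrix.add_mul, Matrix.mul_smul, Matrix.smul_mul]
    push_cast
    module
  refine ⟨(Q : ℂ) • 1, (((1 - Q) * r₁ : ℝ) : ℂ) • (S⁻¹ * P₁ * S⁻¹),
    (((1 - Q) * r₂ : ℝ) : ℂ) • (S⁻¹ * P₂ * S⁻¹), ⟨?_, ?_, ?_, ?_⟩, ?_, ?_⟩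
  · exact PosSemidef.one.smul (Complex.zero_le_real.mpr hQ₀)
  · exact (posSemidef_conj_inv_of_isHermitian hS (posSemidef_vecMulVec_self_star ν₁)).smul
      (Complex.zero_le_real.mpr (mul_nonneg (sub_nonneg.mpr hQ₁) hr₁))
  · exact (posSemidef_conj_inv_of_isHermitian hS (posSemidef_vecMulVec_self_star ν₂)).smul
      (Complex.zero_le_real.mpr (mul_nonneg (sub_nonneg.mpr hQ₁) hr₂))
  · rw [add_assoc, hsum, ← add_smul]
    push_cast
    simp
  · simp [PIof, hR]
  · simp only [Pcor, Matrix.mul_smul, trace_smul, smul_eq_mul, Complex.re_ofReal_mul]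
    linear_combination ((1 - Q) * r₁) * hP₁ + ((1 - Q) * r₂) * hP₂ + c * (1 - Q) * hr

theorem stmt14_general
    (q₁ q₂ : ℝ) (ρ₁ ρ₂ : Matrix (Fin 2) (Fin 2) ℂ)
    (hq : q₁ + q₂ = 1)
    (htr₁ : ρ₁.trace = 1)
    (htr₂ : ρ₂.trace = 1)
    (hρ0 : (rho0 q₁ q₂ ρ₁ ρ₂).PosDef)
    (S : Matrix (Fin 2) (Fin 2) ℂ) (hS : S.PosSemidef) (hSS : S * S = rho0 q₁ q₂ ρ₁ ρ₂)
    (ν₁ ν₂ : Fin 2 → ℂ)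
    (hν₁ : star ν₁ ⬝ᵥ ν₁ = 1) (hν₂ : star ν₂ ⬝ᵥ ν₂ = 1) (hν₁₂ : star ν₁ ⬝ᵥ ν₂ = 0)
    (C₁ C₂ : ℝ) (hCsum : 1 < C₁ + C₂)
    (hbar₁ : S * ((C₁ : ℂ) • vecMulVec ν₁ (star ν₁)
        + ((1 - C₂ : ℝ) : ℂ) • vecMulVec ν₂ (star ν₂)) * S = (q₁ : ℂ) • ρ₁)
    (hbar₂ : S * (((1 - C₁ : ℝ) : ℂ) • vecMulVec ν₁ (star ν₁)
        + (C₂ : ℂ) • vecMulVec ν₂ (star ν₂)) * S = (q₂ : ℂ) • ρ₂)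
    (ρ11 ρ22 : ℝ) (ρ12 : ℂ)
    (h11 : (ρ11 : ℂ) = star ν₁ ⬝ᵥ (rho0 q₁ q₂ ρ₁ ρ₂ *ᵥ ν₁))
    (h22 : (ρ22 : ℂ) = star ν₂ ⬝ᵥ (rho0 q₁ q₂ ρ₁ ρ₂ *ᵥ ν₂))
    (h12 : ρ12 = star ν₁ ⬝ᵥ (rho0 q₁ q₂ ρ₁ ρ₂ *ᵥ ν₂))
    (hCeq : C₁ = C₂) (h12z : ρ12 = 0) :
    ∀ Q ∈ Set.Ico (0 : ℝ) 1, PcorOpt Q q₁ q₂ ρ₁ ρ₂ = C₂ * (1 - Q) := by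
  subst hCeq
  rintro Q ⟨hQ₀, hQ₁⟩
  have hP := vecMulVec_self_star_add_vecMulVec_self_star_eq_one hν₁ hν₂ hν₁₂
  have hR := trace_rho0 hq htr₁ htr₂
  have hSdet : IsUnit S.det := isUnit_of_mul_isUnit_left <| by
    rw [← det_mul, hSS]
    exact (isUnit_iff_isUnit_det _).mp hρ0.isUnit
  have hdec : rho0 q₁ q₂ ρ₁ ρ₂
      = (ρ11 : ℂ) • vecMulVec ν₁ (star ν₁) + (ρ22 : ℂ) • vecMulVec ν₂ (star ν₂) := by
    rw [h11, h22]
    exact eq_smul_add_smul_of_dotProduct_mulVec_eq_zero hρ0.isHermitian hP (h12 ▸ h12z)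
  have hρ11 : 0 ≤ ρ11 :=
    Complex.zero_le_real.mp (h11 ▸ hρ0.posSemidef.dotProduct_mulVec_nonneg ν₁)
  have hρ22 : 0 ≤ ρ22 :=
    Complex.zero_le_real.mp (h22 ▸ hρ0.posSemidef.dotProduct_mulVec_nonneg ν₂)
  refine IsGreatest.csSup_eq ⟨exists_isPOVM_Pcor_eq hS.isHermitian hSdet hSS hR hν₁ hν₂ hν₁₂
    hρ11 hρ22 hdec hbar₁ hbar₂ hQ₀ hQ₁.le, ?_⟩
  rintro _ ⟨M₀, M₁, M₂, hM, rfl, rfl⟩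
  exact Pcor_le hS.isHermitian hSS hR (posSemidef_vecMulVec_self_star ν₁)
    (posSemidef_vecMulVec_self_star ν₂) hP (by linarith) hbar₁ hbar₂ hM

/-- If `C₁ = C₂` and `ρ₁₂ = 0`, then for every `Q ∈ [0,1)`,
`P_cor^opt(Q) = C₂(1−Q)`, i.e. `R_cor^opt(Q) = C₂`. -/
theorem stmt14
    (q₁ q₂ : ℝ) (ρ₁ ρ₂ : Matrix (Fin 2) (Fin 2) ℂ)
    (hq₁ : 0 < q₁) (hq₂ : 0 < q₂) (hq : q₁ + q₂ = 1)
    (hρ₁ : ρ₁.PosSemidef) (htr₁ : ρ₁.trace = 1)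
    (hρ₂ : ρ₂.PosSemidef) (htr₂ : ρ₂.trace = 1)
    (hρ0 : (rho0 q₁ q₂ ρ₁ ρ₂).PosDef)
    (S : Matrix (Fin 2) (Fin 2) ℂ) (hS : S.PosSemidef) (hSS : S * S = rho0 q₁ q₂ ρ₁ ρ₂)
    (ν₁ ν₂ : Fin 2 → ℂ)
    (hν₁ : star ν₁ ⬝ᵥ ν₁ = 1) (hν₂ : star ν₂ ⬝ᵥ ν₂ = 1) (hν₁₂ : star ν₁ ⬝ᵥ ν₂ = 0)
    (C₁ C₂ : ℝ) (hC12 : C₁ ≤ C₂) (hCsum : 1 < C₁ + C₂)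
    (hbar₁ : S * ((C₁ : ℂ) • vecMulVec ν₁ (star ν₁)
        + ((1 - C₂ : ℝ) : ℂ) • vecMulVec ν₂ (star ν₂)) * S = (q₁ : ℂ) • ρ₁)
    (hbar₂ : S * (((1 - C₁ : ℝ) : ℂ) • vecMulVec ν₁ (star ν₁)
        + (C₂ : ℂ) • vecMulVec ν₂ (star ν₂)) * S = (q₂ : ℂ) • ρ₂)
    (ρ11 ρ22 : ℝ) (ρ12 : ℂ)
    (h11 : (ρ11 : ℂ) = star ν₁ ⬝ᵥ (rho0 q₁ q₂ ρ₁ ρ₂ *ᵥ ν₁))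
    (h22 : (ρ22 : ℂ) = star ν₂ ⬝ᵥ (rho0 q₁ q₂ ρ₁ ρ₂ *ᵥ ν₂))
    (h12 : ρ12 = star ν₁ ⬝ᵥ (rho0 q₁ q₂ ρ₁ ρ₂ *ᵥ ν₂))
    (hCeq : C₁ = C₂) (h12z : ρ12 = 0) :
    ∀ Q ∈ Set.Ico (0 : ℝ) 1, PcorOpt Q q₁ q₂ ρ₁ ρ₂ = C₂ * (1 - Q) :=
  stmt14_general q₁ q₂ ρ₁ ρ₂ hq htr₁ htr₂ hρ0 S hS hSS ν₁ ν₂ hν₁ hν₂ hν₁₂ C₁ C₂ hCsum hbar₁ hbar₂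
    ρ11 ρ22 ρ12 h11 h22 h12 hCeq h12z

end FRIR
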